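/- Let G=(V,E) be a finite simple undirected graph with β_e > 1 for all e ∈ E and 0 < λ_v ≤ 1 for all v ∈ V, and let the weighted random cluster model have edge parameters q_e = 1 − 1/β_e and vertex weights λ. Then for every σ ∈ {0,1}^V and every S ⊆ E, π_Ising(σ) · P_{I→R}(σ, S) = π_wrc(S) · P_{R→I}(S, σ). -/

import Mathlib

open Finset
open scoped Classical

noncomputable section

variable {V : Type*} [Fintype V] [DecidableEq V]

/-- The vertex set of the connected component of `v` in the graph `(V, S)`. -/
def compOf (S : Finset (Sym2 V)) (v : V) : Finset V :=
  Finset.univ.filter fun u => (SimpleGraph.fromEdgeSet (↑S : Set (Sym2 V))).Reachable v u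

/-- `κ(V,S)`: the set of vertex sets of connected components of the graph `(V, S)`. -/
def kappa (S : Finset (Sym2 V)) : Finset (Finset V) :=
  Finset.univ.image (compOf S)

/-- `∏_{C ∈ κ(V,S)} (1 + ∏_{u ∈ C} λ_u)`. -/
def clusterProd (S : Finset (Sym2 V)) (lam : V → ℝ) : ℝ :=
  ∏ C ∈ kappa S, (1 + ∏ u ∈ C, lam u)

/-- Weight of an edge subset `S ⊆ E₀` in the weighted random cluster model. -/
def wtWRC (E₀ : Finset (Sym2 V)) (q : Sym2 V → ℝ) (lam : V → ℝ) (S : Finset (Sym2 V)) : ℝ :=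
  (∏ e ∈ S, q e) * (∏ f ∈ E₀ \ S, (1 - q f)) * clusterProd S lam

/-- Partition function of the weighted random cluster model. -/
def ZWRC (E₀ : Finset (Sym2 V)) (q : Sym2 V → ℝ) (lam : V → ℝ) : ℝ :=
  ∑ S ∈ E₀.powerset, wtWRC E₀ q lam S

/-- The weighted random cluster distribution. -/
def piWRC (E₀ : Finset (Sym2 V)) (q : Sym2 V → ℝ) (lam : V → ℝ) (S : Finset (Sym2 V)) : ℝ :=
  wtWRC E₀ q lam S / ZWRC E₀ q lam

/-- The monochromatic edges of a spin configuration `σ`. -/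
def monoEdges (E₀ : Finset (Sym2 V)) (σ : V → Bool) : Finset (Sym2 V) :=
  E₀.filter fun e => (e.map σ).IsDiag

/-- Weight of a spin configuration in the Ising model. -/
def wtIsing (E₀ : Finset (Sym2 V)) (β : Sym2 V → ℝ) (lam : V → ℝ) (σ : V → Bool) : ℝ :=
  (∏ e ∈ monoEdges E₀ σ, β e) * ∏ v : V, (if σ v then lam v else 1)

/-- Ising partition function. -/
def ZIsing (E₀ : Finset (Sym2 V)) (β : Sym2 V → ℝ) (lam : V → ℝ) : ℝ :=
  ∑ σ : V → Bool, wtIsing E₀ β lam σ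

/-- Ising Gibbs distribution. -/
def piIsing (E₀ : Finset (Sym2 V)) (β : Sym2 V → ℝ) (lam : V → ℝ) (σ : V → Bool) : ℝ :=
  wtIsing E₀ β lam σ / ZIsing E₀ β lam

/-- Vertices of odd degree in the graph `(V, S)`. -/
def oddVerts (S : Finset (Sym2 V)) : Finset V :=
  Finset.univ.filter fun v => Odd (S.filter fun e => v ∈ e).card

/-- Weight of an edge subset in the subgraph-world model. -/
def wtSG (E₀ : Finset (Sym2 V)) (p : Sym2 V → ℝ) (η : V → ℝ) (S : Finset (Sym2 V)) : ℝ :=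
  (∏ e ∈ S, p e) * (∏ f ∈ E₀ \ S, (1 - p f)) * ∏ v ∈ oddVerts S, η v

/-- Subgraph-world partition function. -/
def ZSG (E₀ : Finset (Sym2 V)) (p : Sym2 V → ℝ) (η : V → ℝ) : ℝ :=
  ∑ S ∈ E₀.powerset, wtSG E₀ p η S

/-- Subgraph-world distribution. -/
def piSG (E₀ : Finset (Sym2 V)) (p : Sym2 V → ℝ) (η : V → ℝ) (S : Finset (Sym2 V)) : ℝ :=
  wtSG E₀ p η S / ZSG E₀ p η

/-- The transformation `P_{I→R}` from Ising configurations to edge subsets. -/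
def PIR (E₀ : Finset (Sym2 V)) (β : Sym2 V → ℝ) (σ : V → Bool) (S : Finset (Sym2 V)) : ℝ :=
  if S ⊆ monoEdges E₀ σ then
    (∏ e ∈ S, (1 - (β e)⁻¹)) * ∏ f ∈ monoEdges E₀ σ \ S, (β f)⁻¹
  else 0

/-- The transformation `P_{R→I}` from edge subsets to Ising configurations. -/
def PRI (E₀ : Finset (Sym2 V)) (lam : V → ℝ) (S : Finset (Sym2 V)) (σ : V → Bool) : ℝ :=
  if S ⊆ monoEdges E₀ σ then
    ∏ C ∈ kappa S, ((∏ v ∈ C, if σ v then lam v else 1) / (1 + ∏ v ∈ C, lam v))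
  else 0

/-- Swendsen-Wang dynamics for the Ising model: `P_{I→R} ⬝ P_{R→I}`. -/
def PSWIsing (E₀ : Finset (Sym2 V)) (β : Sym2 V → ℝ) (lam : V → ℝ) (σ τ : V → Bool) : ℝ :=
  ∑ S ∈ E₀.powerset, PIR E₀ β σ S * PRI E₀ lam S τ

/-- Swendsen-Wang dynamics for the weighted random cluster model: `P_{R→I} ⬝ P_{I→R}`. -/
def PSWwrc (E₀ : Finset (Sym2 V)) (β : Sym2 V → ℝ) (lam : V → ℝ)
    (S S' : Finset (Sym2 V)) : ℝ :=
  ∑ σ : V → Bool, PRI E₀ lam S σ * PIR E₀ β σ S'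

/-- Lazy edge-flipping (Metropolis) dynamics for a distribution `pi` on subsets of `E₀`. -/
def PEF (E₀ : Finset (Sym2 V)) (pi : Finset (Sym2 V) → ℝ) (x y : Finset (Sym2 V)) : ℝ :=
  if x = y then
    1 - (1 / (2 * (E₀.card : ℝ))) * ∑ e ∈ E₀, min 1 (pi (symmDiff x {e}) / pi x)
  else if (symmDiff x y).card = 1 then
    (1 / (2 * (E₀.card : ℝ))) * min 1 (pi y / pi x)
  else 0

/-- Variance of `f` with respect to a distribution `pi` supported on `states`. -/
def varOn {α : Type*} (states : Finset α) (pi f : α → ℝ) : ℝ :=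
  (∑ x ∈ states, pi x * f x ^ 2) - (∑ x ∈ states, pi x * f x) ^ 2

/-- Dirichlet form of a Markov kernel `P` with stationary distribution `pi` on `states`. -/
def dirichletOn {α : Type*} (states : Finset α) (pi : α → ℝ) (P : α → α → ℝ) (f : α → ℝ) : ℝ :=
  ∑ x ∈ states, pi x * f x * (f x - ∑ y ∈ states, P x y * f y)

/-- Spectral gap of a reversible Markov kernel `P` with stationary distribution `pi`. -/
def gapOn {α : Type*} (states : Finset α) (pi : α → ℝ) (P : α → α → ℝ) : ℝ :=
  sInf ((fun f : α → ℝ => dirichletOn states pi P f / varOn states pi f) ''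
    {f | varOn states pi f ≠ 0})

/-- Total variation distance between two distributions on `states`. -/
def dTV {α : Type*} (states : Finset α) (μ ν : α → ℝ) : ℝ :=
  (1 / 2) * ∑ z ∈ states, |μ z - ν z|

/-- `t`-step transition probabilities of the Markov kernel `P` on state space `states`. -/
def kpow {α : Type*} (states : Finset α) (P : α → α → ℝ) : ℕ → α → α → ℝ
  | 0 => fun x y => if x = y then 1 else 0
  | (t + 1) => fun x y => ∑ z ∈ states, P x z * kpow states P t z y

/-! When `S` is monochromatic for `σ`, both `wtIsing σ · P_{I→R}(σ,S)` and
`(∏_e β_e) · wtWRC S · P_{R→I}(S,σ)` equal `∏_{e ∈ S} (β_e - 1) · ∏_v λ_v^{σ(v)}`, and otherwise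
both vanish. Both kernels are stochastic: a row of `P_{I→R}` expands
`∏_{e ∈ M(σ)} ((1 - 1/β_e) + 1/β_e)`, and the spins compatible with `S` are exactly those
constant on the clusters of `S`, so a row of `P_{R→I}` expands
`∏_C (∏_{v ∈ C} λ_v + 1) / (1 + ∏_{v ∈ C} λ_v)`. Summing the joint identity over `σ` and `S`
thus gives `Z_Ising = (∏_e β_e) Z_wrc`, and dividing yields the balance equation. -/

theorem Finset.prod_mul_prod_sdiff_inv {ι M : Type*} [DecidableEq ι] [CommGroupWithZero M]
    {s t : Finset ι} {f : ι → M} (hst : s ⊆ t) (hf : ∀ i ∈ t, f i ≠ 0) :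
    (∏ i ∈ t, f i) * ∏ i ∈ t \ s, (f i)⁻¹ = ∏ i ∈ s, f i := by
  have hsdiff : ∏ i ∈ t \ s, f i ≠ 0 :=
    prod_ne_zero_iff.mpr fun i hi => hf i (mem_sdiff.mp hi).1
  rw [← prod_sdiff hst, prod_inv_distrib, mul_right_comm, mul_inv_cancel₀ hsdiff,
    one_mul]

section Clusters

variable {S : Finset (Sym2 V)}

theorem mem_compOf {u v : V} :
    u ∈ compOf S v ↔ (SimpleGraph.fromEdgeSet (↑S : Set (Sym2 V))).Reachable v u := by
  simp [compOf]

theorem mem_compOf_self (v : V) : v ∈ compOf S v :=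
  mem_compOf.mpr (SimpleGraph.Reachable.refl v)

theorem compOf_eq_of_mem {u v : V} (h : u ∈ compOf S v) : compOf S u = compOf S v := by
  rw [mem_compOf] at h
  ext w
  simp only [mem_compOf]
  exact ⟨h.trans, h.symm.trans⟩

theorem compOf_eq_of_mem_kappa {C : Finset V} (hC : C ∈ kappa S) {v : V} (hv : v ∈ C) :
    compOf S v = C := by
  obtain ⟨w, -, rfl⟩ := mem_image.mp hC
  exact compOf_eq_of_mem hv

theorem prod_kappa_prod {M : Type*} [CommMonoid M] (f : V → M) :
    ∏ C ∈ kappa S, ∏ v ∈ C, f v = ∏ v, f v := by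
  rw [← prod_fiberwise_of_maps_to (t := kappa S) (g := compOf S)
    fun v _ => mem_image_of_mem _ (mem_univ v)]
  refine prod_congr rfl fun C hC => prod_congr ?_ fun _ _ => rfl
  ext v
  simpa using ⟨compOf_eq_of_mem_kappa hC, fun h => h ▸ mem_compOf_self v⟩

theorem subset_monoEdges_iff {E₀ : Finset (Sym2 V)} (hSE : S ⊆ E₀) {σ : V → Bool} :
    S ⊆ monoEdges E₀ σ ↔ ∀ v, ∀ u ∈ compOf S v, σ u = σ v := by
  simp only [mem_compOf, SimpleGraph.reachable_fromEdgeSet_eq_reflTransGen_toRel]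
  constructor
  · intro hS v u h
    induction h with
    | refl => rfl
    | tail _ hbc ih =>
      have hdiag := (mem_filter.mp (hS hbc)).2
      rw [Sym2.map_mk, Sym2.mk_isDiag_iff] at hdiag
      rw [← hdiag, ih]
  · intro hσ e he
    induction e using Sym2.ind with
    | _ a b =>
      refine mem_filter.mpr ⟨hSE he, ?_⟩
      rw [Sym2.map_mk, Sym2.mk_isDiag_iff]
      exact (hσ a b (.single (by simpa using he))).symm

def spinOfClusters (S : Finset (Sym2 V)) (T : Finset (Finset V)) (v : V) : Bool :=
  decide (compOf S v ∈ T)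

def trueClusters (S : Finset (Sym2 V)) (σ : V → Bool) : Finset (Finset V) :=
  (univ.filter fun v => σ v = true).image (compOf S)

theorem trueClusters_subset_kappa (σ : V → Bool) : trueClusters S σ ⊆ kappa S :=
  image_subset_image (filter_subset _ _)

theorem spinOfClusters_trueClusters {σ : V → Bool} (hσ : ∀ v, ∀ u ∈ compOf S v, σ u = σ v) :
    spinOfClusters S (trueClusters S σ) = σ := by
  funext v
  simp only [spinOfClusters, trueClusters, mem_image, mem_filter,
    mem_univ, true_and]
  rw [Bool.eq_iff_iff, decide_eq_true_eq]
  constructor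
  · rintro ⟨u, hu, hcomp⟩
    rw [hσ u v (hcomp ▸ mem_compOf_self v), hu]
  · exact fun hv => ⟨v, hv, rfl⟩

theorem trueClusters_spinOfClusters {T : Finset (Finset V)} (hT : T ⊆ kappa S) :
    trueClusters S (spinOfClusters S T) = T := by
  ext C
  simp only [spinOfClusters, trueClusters, mem_image, mem_filter,
    mem_univ, true_and, decide_eq_true_eq]
  constructor
  · rintro ⟨v, hv, rfl⟩
    exact hv
  · intro hC
    obtain ⟨v, -, rfl⟩ := mem_image.mp (hT hC)
    exact ⟨v, hC, rfl⟩

theorem subset_monoEdges_spinOfClusters {E₀ : Finset (Sym2 V)} (hSE : S ⊆ E₀)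
    (T : Finset (Finset V)) : S ⊆ monoEdges E₀ (spinOfClusters S T) :=
  (subset_monoEdges_iff hSE).mpr fun _ _ hu => by simp only [spinOfClusters, compOf_eq_of_mem hu]

theorem PRI_spinOfClusters {E₀ : Finset (Sym2 V)} (hSE : S ⊆ E₀) (lam : V → ℝ)
    {T : Finset (Finset V)} (hT : T ⊆ kappa S) :
    PRI E₀ lam S (spinOfClusters S T) =
      (∏ C ∈ T, (∏ v ∈ C, lam v) / (1 + ∏ v ∈ C, lam v)) *
        ∏ C ∈ kappa S \ T, 1 / (1 + ∏ v ∈ C, lam v) := by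
  have hsplit := prod_piecewise (kappa S) T
    (fun C => (∏ v ∈ C, lam v) / (1 + ∏ v ∈ C, lam v)) (fun C => 1 / (1 + ∏ v ∈ C, lam v))
  rw [inter_eq_right.mpr hT] at hsplit
  rw [PRI, if_pos (subset_monoEdges_spinOfClusters hSE T), ← hsplit]
  refine prod_congr rfl fun C hC => ?_
  have hspin : ∀ v ∈ C, spinOfClusters S T v = decide (C ∈ T) := fun v hv => by
    rw [spinOfClusters, compOf_eq_of_mem_kappa hC hv]
  rw [prod_congr rfl fun v hv => by rw [hspin v hv]]
  by_cases hCT : C ∈ T <;> simp [hCT]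

theorem sum_PRI {E₀ : Finset (Sym2 V)} (hSE : S ⊆ E₀) {lam : V → ℝ} (hlam : ∀ v, 0 < lam v) :
    ∑ σ : V → Bool, PRI E₀ lam S σ = 1 := by
  have hΛ (C : Finset V) : 1 + ∏ v ∈ C, lam v ≠ 0 :=
    (add_pos one_pos (prod_pos fun v _ => hlam v)).ne'
  have hcompat : ∑ σ with S ⊆ monoEdges E₀ σ, PRI E₀ lam S σ = ∑ σ, PRI E₀ lam S σ :=
    sum_filter_of_ne fun σ _ h => by_contra fun hσ => h (if_neg hσ)
  have hinv : ∀ σ ∈ univ.filter fun σ => S ⊆ monoEdges E₀ σ,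
      spinOfClusters S (trueClusters S σ) = σ := fun σ hσ =>
    spinOfClusters_trueClusters ((subset_monoEdges_iff hSE).mp (mem_filter.mp hσ).2)
  rw [← hcompat, sum_nbij' (trueClusters S) (spinOfClusters S)
    (t := (kappa S).powerset) (g := fun T => PRI E₀ lam S (spinOfClusters S T))
    (fun σ _ => mem_powerset.mpr (trueClusters_subset_kappa σ))
    (fun T _ => mem_filter.mpr ⟨mem_univ _, subset_monoEdges_spinOfClusters hSE T⟩)
    (fun σ hσ => hinv σ hσ) (fun T hT => trueClusters_spinOfClusters (mem_powerset.mp hT))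
    (fun σ hσ => by rw [hinv σ hσ])]
  rw [sum_congr rfl fun T hT => PRI_spinOfClusters hSE lam (mem_powerset.mp hT),
    ← prod_add]
  exact prod_eq_one fun C _ => by rw [← add_div, add_comm, div_self (hΛ C)]

theorem clusterProd_mul_prod_div {lam : V → ℝ} (hlam : ∀ v, 0 < lam v) (f : V → ℝ) :
    clusterProd S lam * ∏ C ∈ kappa S, (∏ v ∈ C, f v) / (1 + ∏ v ∈ C, lam v) = ∏ v, f v := by
  rw [clusterProd, ← prod_mul_distrib, ← prod_kappa_prod f]
  exact prod_congr rfl fun C _ =>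
    mul_div_cancel₀ _ (add_pos one_pos (prod_pos fun v _ => hlam v)).ne'

end Clusters

omit [Fintype V] in
theorem sum_PIR (E₀ : Finset (Sym2 V)) (β : Sym2 V → ℝ) (σ : V → Bool) :
    ∑ S ∈ E₀.powerset, PIR E₀ β σ S = 1 := by
  have hvanish : ∀ S ∈ E₀.powerset, S ∉ (monoEdges E₀ σ).powerset → PIR E₀ β σ S = 0 :=
    fun _ _ hS => if_neg (mt mem_powerset.mpr hS)
  have hrow : ∀ S ∈ (monoEdges E₀ σ).powerset,
      PIR E₀ β σ S = (∏ e ∈ S, (1 - (β e)⁻¹)) * ∏ e ∈ monoEdges E₀ σ \ S, (β e)⁻¹ :=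
    fun _ hS => if_pos (mem_powerset.mp hS)
  have hsub : (monoEdges E₀ σ).powerset ⊆ E₀.powerset :=
    powerset_mono.mpr (filter_subset _ _)
  rw [← sum_subset hsub hvanish,
    sum_congr rfl hrow, ← prod_add]
  simp

theorem wtIsing_mul_PIR {E₀ S : Finset (Sym2 V)} (hSE : S ⊆ E₀) {β : Sym2 V → ℝ}
    (hβ : ∀ e ∈ E₀, β e ≠ 0) {lam : V → ℝ} (hlam : ∀ v, 0 < lam v) (σ : V → Bool) :
    wtIsing E₀ β lam σ * PIR E₀ β σ S =
      (∏ e ∈ E₀, β e) * (wtWRC E₀ (fun e => 1 - (β e)⁻¹) lam S * PRI E₀ lam S σ) := by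
  by_cases hS : S ⊆ monoEdges E₀ σ
  swap
  · simp [PIR, PRI, hS]
  have hmono : (∏ e ∈ monoEdges E₀ σ, β e) * ∏ e ∈ monoEdges E₀ σ \ S, (β e)⁻¹ = ∏ e ∈ S, β e :=
    prod_mul_prod_sdiff_inv hS fun e he => hβ e (mem_filter.mp he).1
  have hall : (∏ e ∈ E₀, β e) * ∏ e ∈ E₀ \ S, (1 - (1 - (β e)⁻¹)) = ∏ e ∈ S, β e := by
    simp only [sub_sub_cancel]
    exact prod_mul_prod_sdiff_inv hSE hβ
  have hclusters := clusterProd_mul_prod_div (S := S) hlam fun v => if σ v then lam v else 1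
  rw [wtIsing, PIR, if_pos hS, wtWRC, PRI, if_pos hS]
  linear_combination
    ((∏ v, if σ v then lam v else 1) * ∏ e ∈ S, (1 - (β e)⁻¹)) * hmono
    - ((∏ e ∈ S, (1 - (β e)⁻¹)) * clusterProd S lam *
        ∏ C ∈ kappa S, (∏ v ∈ C, if σ v then lam v else 1) / (1 + ∏ v ∈ C, lam v)) * hall
    - ((∏ e ∈ S, (1 - (β e)⁻¹)) * ∏ e ∈ S, β e) * hclusters

theorem ZIsing_eq_mul_ZWRC {E₀ : Finset (Sym2 V)} {β : Sym2 V → ℝ} (hβ : ∀ e ∈ E₀, β e ≠ 0)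
    {lam : V → ℝ} (hlam : ∀ v, 0 < lam v) :
    ZIsing E₀ β lam = (∏ e ∈ E₀, β e) * ZWRC E₀ (fun e => 1 - (β e)⁻¹) lam := by
  calc ZIsing E₀ β lam
      = ∑ σ : V → Bool, ∑ S ∈ E₀.powerset, wtIsing E₀ β lam σ * PIR E₀ β σ S := by
        simp only [ZIsing, ← mul_sum, sum_PIR, mul_one]
    _ = ∑ S ∈ E₀.powerset, ∑ σ : V → Bool,
          (∏ e ∈ E₀, β e) * (wtWRC E₀ (fun e => 1 - (β e)⁻¹) lam S * PRI E₀ lam S σ) := by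
        rw [sum_comm]
        exact sum_congr rfl fun S hS => sum_congr rfl fun σ _ =>
          wtIsing_mul_PIR (mem_powerset.mp hS) hβ hlam σ
    _ = (∏ e ∈ E₀, β e) * ZWRC E₀ (fun e => 1 - (β e)⁻¹) lam := by
        rw [ZWRC, mul_sum]
        refine sum_congr rfl fun S hS => ?_
        rw [← mul_sum, ← mul_sum, sum_PRI (mem_powerset.mp hS) hlam, mul_one]

/-- Detailed-balance relation between `P_{I→R}` and `P_{R→I}`:
`π_Ising(σ)·P_{I→R}(σ,S) = π_wrc(S)·P_{R→I}(S,σ)` with `q_e = 1 − 1/β_e`. -/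
theorem pir_pri_balance {V : Type*} [Fintype V] [DecidableEq V]
    (G : SimpleGraph V) [DecidableRel G.Adj]
    (β : Sym2 V → ℝ) (lam : V → ℝ)
    (hβ : ∀ e ∈ G.edgeFinset, 1 < β e)
    (hlam : ∀ v : V, 0 < lam v ∧ lam v ≤ 1) :
    ∀ (σ : V → Bool), ∀ S ∈ G.edgeFinset.powerset,
      piIsing G.edgeFinset β lam σ * PIR G.edgeFinset β σ S =
        piWRC G.edgeFinset (fun e => 1 - (β e)⁻¹) lam S * PRI G.edgeFinset lam S σ := by
  intro σ S hS
  have hβ₀ : ∀ e ∈ G.edgeFinset, β e ≠ 0 := fun e he => (one_pos.trans (hβ e he)).ne'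
  have hlam₀ : ∀ v, 0 < lam v := fun v => (hlam v).1
  have hB : ∏ e ∈ G.edgeFinset, β e ≠ 0 := prod_ne_zero_iff.mpr hβ₀
  rw [piIsing, piWRC, div_mul_eq_mul_div, div_mul_eq_mul_div,
    wtIsing_mul_PIR (mem_powerset.mp hS) hβ₀ hlam₀, ZIsing_eq_mul_ZWRC hβ₀ hlam₀,
    mul_div_mul_left _ _ hB]

end
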